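/- arXiv:2011.11209 — 2 statements merged into one kernel-verified Lean document; each statement's English description precedes it below -/
import Mathlib

section
/- Let B×_f F be a (possibly degenerate) warped product of singular semi-Riemannian manifolds (B,g_B) and (F,g_F) with warping function f ∈ C^∞(B), let X,Y,Z be vector fields on B and U,V,W vector fields on F (identified with their lifts), and let P be a vector field on B. Let K̄ be the semi-symmetric metric Koszul form of B×_f F with respect to P, K̄_B that of (B,g_B) with respect to P, and K_F the Koszul form of (F,g_F). Then: (1) K̄(X,Y,Z) = K̄_B(X,Y,Z); (2) K̄(X,Y,W) = K̄(X,W,Y) = K̄(W,X,Y) = 0; (3) K̄(X,V,W) = f·g_F(V,W)·X(f); (4) K̄(V,X,W) = −K̄(V,W,X) = f·g_F(V,W)·X(f) + f²·g_B(X,P)·g_F(V,W); (5) K̄(U,V,W) = f²·K_F(U,V,W). -/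
noncomputable section

/-!
An algebraic (Koszul-style) model of singular semi-Riemannian manifolds, following
Stoica's "singular semi-Riemannian geometry".

* `M` is the set of points of the smooth manifold;
* `T p` is the tangent space at `p : M`;
* `IsFn h` says that `h : M → ℝ` is a smooth function, i.e. `h ∈ C^∞(M)`;
* `IsVF X` says that the section `X : ∀ p, T p` of the tangent bundle is a smooth
  vector field, i.e. `X ∈ Γ(TM)`;
* `D X h` is the derivative `X(h)` of the smooth function `h` along `X`;
* `bracket X Y` is the Lie bracket `[X,Y]` of vector fields;
* `g` is the metric: a smooth symmetric bilinear form on the tangent bundle, which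
  may be degenerate and of variable signature.
-/
structure SSRM (M : Type*) (T : M → Type*)
    [∀ p, AddCommGroup (T p)] [∀ p, Module ℝ (T p)] where
  /-- the smooth real functions `C^∞(M)` -/
  IsFn : (M → ℝ) → Prop
  /-- the smooth vector fields `Γ(TM)` -/
  IsVF : (∀ p, T p) → Prop
  /-- the directional derivative `X(h)` of a function along a vector field -/
  D : (∀ p, T p) → (M → ℝ) → M → ℝ
  /-- the Lie bracket of vector fields -/
  bracket : (∀ p, T p) → (∀ p, T p) → ∀ p, T p
  /-- the (possibly degenerate) metric, pointwise a bilinear form -/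
  g : ∀ p, T p →ₗ[ℝ] T p →ₗ[ℝ] ℝ
  g_symm : ∀ p u v, g p u v = g p v u
  fn_const : ∀ c : ℝ, IsFn fun _ => c
  fn_add : ∀ a b, IsFn a → IsFn b → IsFn (a + b)
  fn_mul : ∀ a b, IsFn a → IsFn b → IsFn (a * b)
  vf_add : ∀ X Y, IsVF X → IsVF Y → IsVF (X + Y)
  vf_smul : ∀ a X, IsFn a → IsVF X → IsVF fun p => a p • X p
  vf_smulR : ∀ (r : ℝ) X, IsVF X → IsVF (r • X)
  g_smooth : ∀ X Y, IsVF X → IsVF Y → IsFn fun p => g p (X p) (Y p)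
  D_smooth : ∀ X a, IsVF X → IsFn a → IsFn (D X a)
  D_add_fn : ∀ X a b, IsVF X → IsFn a → IsFn b → D X (a + b) = D X a + D X b
  D_mul_fn : ∀ X a b, IsVF X → IsFn a → IsFn b → D X (a * b) = D X a * b + a * D X b
  D_const : ∀ X (c : ℝ), IsVF X → D X (fun _ => c) = 0
  D_add_vf : ∀ X Y a, IsVF X → IsVF Y → IsFn a → D (X + Y) a = D X a + D Y a
  D_smul_vf : ∀ b X a, IsFn b → IsVF X → IsFn a →
    D (fun p => b p • X p) a = b * D X a
  bracket_smooth : ∀ X Y, IsVF X → IsVF Y → IsVF (bracket X Y)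
  bracket_antisymm : ∀ X Y, IsVF X → IsVF Y → bracket X Y = -bracket Y X
  bracket_add_left : ∀ X Y Z, IsVF X → IsVF Y → IsVF Z →
    bracket (X + Y) Z = bracket X Z + bracket Y Z
  bracket_leibniz : ∀ X a Y, IsVF X → IsFn a → IsVF Y →
    bracket X (fun p => a p • Y p)
      = (fun p => a p • bracket X Y p) + (fun p => D X a p • Y p)
  D_bracket : ∀ X Y a, IsVF X → IsVF Y → IsFn a →
    D (bracket X Y) a = D X (D Y a) - D Y (D X a)

namespace SSRM

variable {M : Type*} {T : M → Type*} [∀ p, AddCommGroup (T p)] [∀ p, Module ℝ (T p)]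

/-- `⟨X,Y⟩ = g(X,Y)`, as a function on `M`. -/
def gf (S : SSRM M T) (X Y : ∀ p, T p) : M → ℝ := fun p => S.g p (X p) (Y p)

/-- The Koszul form
`K(X,Y,Z) = (1/2){X⟨Y,Z⟩ + Y⟨Z,X⟩ − Z⟨X,Y⟩ − ⟨X,[Y,Z]⟩ + ⟨Y,[Z,X]⟩ + ⟨Z,[X,Y]⟩}`. -/
def K (S : SSRM M T) (X Y Z : ∀ p, T p) : M → ℝ :=
  ((1 : ℝ) / 2) • (S.D X (S.gf Y Z) + S.D Y (S.gf Z X) - S.D Z (S.gf X Y)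
    - S.gf X (S.bracket Y Z) + S.gf Y (S.bracket Z X) + S.gf Z (S.bracket X Y))

/-- The semi-symmetric metric Koszul form (w.r.t. the vector field `P`):
`K̄(X,Y,Z) = K(X,Y,Z) + g(Y,P)g(X,Z) − g(X,Y)g(P,Z)`. -/
def Kbar (S : SSRM M T) (P X Y Z : ∀ p, T p) : M → ℝ :=
  S.K X Y Z + S.gf Y P * S.gf X Z - S.gf X Y * S.gf P Z

/-- The semi-symmetric non-metric Koszul form (w.r.t. the vector field `P`):
`K̂(X,Y,Z) = K(X,Y,Z) + g(Y,P)g(X,Z)`. -/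
def Khat (S : SSRM M T) (P X Y Z : ∀ p, T p) : M → ℝ :=
  S.K X Y Z + S.gf Y P * S.gf X Z

/-- The Lie derivative of the metric:
`(L_Y g)(Z,X) = Y(g(Z,X)) − g([Y,Z],X) − g(Z,[Y,X])`. -/
def lieD (S : SSRM M T) (Y Z X : ∀ p, T p) : M → ℝ :=
  S.D Y (S.gf Z X) - S.gf (S.bracket Y Z) X - S.gf Z (S.bracket Y X)

/-- `W ∈ Γ₀(TM)`: a smooth vector field with `g(W,Y) = 0` for every vector field `Y`. -/
def Gamma0 (S : SSRM M T) (W : ∀ p, T p) : Prop :=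
  S.IsVF W ∧ ∀ Y, S.IsVF Y → S.gf W Y = 0

/-- A 1-form `ω` (given by its action `ω(Z)` on vector fields) belongs to `A^•(M)`:
at every point `p` the covector `ω_p` lies in the image of the flat map
`v ↦ g_p(v,·) : T_pM → T_p*M`. -/
def MemAsup (S : SSRM M T) (ω : (∀ p, T p) → M → ℝ) : Prop :=
  ∀ p : M, ∃ v : T p, ∀ Z, S.IsVF Z → ω Z p = S.g p v (Z p)

/-- `(M,g)` is radical-stationary: `K(X,Y,·) ∈ A^•(M)` for all vector fields `X,Y`. -/
def RadicalStationary (S : SSRM M T) : Prop :=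
  ∀ X Y, S.IsVF X → S.IsVF Y → S.MemAsup fun Z => S.K X Y Z

/-- `Y^♭ = g(Y,·)`, as a 1-form. -/
def flat (S : SSRM M T) (Y : ∀ p, T p) : (∀ p, T p) → M → ℝ := fun Z => S.gf Y Z

/-- The semi-symmetric metric lower covariant derivative: `∇̄♭_X Y = K̄(X,Y,·)`. -/
def nablaFlatBar (S : SSRM M T) (P X Y : ∀ p, T p) : (∀ p, T p) → M → ℝ :=
  fun Z => S.Kbar P X Y Z

/-- The semi-symmetric non-metric lower covariant derivative: `∇̂♭_X Y = K̂(X,Y,·)`. -/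
def nablaFlatHat (S : SSRM M T) (P X Y : ∀ p, T p) : (∀ p, T p) → M → ℝ :=
  fun Z => S.Khat P X Y Z

/-- Pointwise application of a bundle map `J : TM → TM` to a vector field. -/
def Jv (J : ∀ p, T p →ₗ[ℝ] T p) (X : ∀ p, T p) : ∀ p, T p := fun p => J p (X p)

/-- `J` is an almost product structure on `(M,g)`: a smooth bundle map `J : TM → TM`
with `J² = id` and `g(JX,JY) = g(X,Y)`. -/
structure IsAlmostProduct (S : SSRM M T) (J : ∀ p, T p →ₗ[ℝ] T p) : Prop where
  invol : ∀ p v, J p (J p v) = v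
  compat : ∀ p u v, S.g p (J p u) (J p v) = S.g p u v
  smooth : ∀ X, S.IsVF X → S.IsVF (Jv J X)

/-- The almost product Koszul form `K̃(X,Y,Z) = (1/2)[K(X,Y,Z) + K(X,JY,JZ)]`. -/
def Ktilde (S : SSRM M T) (J : ∀ p, T p →ₗ[ℝ] T p) (X Y Z : ∀ p, T p) : M → ℝ :=
  ((1 : ℝ) / 2) • (S.K X Y Z + S.K X (Jv J Y) (Jv J Z))

/-- The almost product lower covariant derivative: `∇̃♭_X Y = K̃(X,Y,·)`. -/
def nablaFlatTilde (S : SSRM M T) (J : ∀ p, T p →ₗ[ℝ] T p) (X Y : ∀ p, T p) :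
    (∀ p, T p) → M → ℝ :=
  fun Z => S.Ktilde J X Y Z

end SSRM

namespace SSRM

variable {MB MF : Type*} {TB : MB → Type*} {TF : MF → Type*}
  [∀ p, AddCommGroup (TB p)] [∀ p, Module ℝ (TB p)]
  [∀ q, AddCommGroup (TF q)] [∀ q, Module ℝ (TF q)]

/-- The lift to the product `B × F` of a vector field on the base `B`. -/
def liftB (X : ∀ p, TB p) : ∀ pq : MB × MF, TB pq.1 × TF pq.2 :=
  fun pq => (X pq.1, 0)

/-- The lift to the product `B × F` of a vector field on the fiber `F`. -/
def liftF (U : ∀ q, TF q) : ∀ pq : MB × MF, TB pq.1 × TF pq.2 :=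
  fun pq => (0, U pq.2)

/-- `W` is the warped product `B ×_f F` of the singular semi-Riemannian manifolds
`B` and `F` with warping function `f ∈ C^∞(B)`: a singular semi-Riemannian structure
on the product manifold `B × F` whose metric is
`⟨x,y⟩ = g_B(dπ_B x, dπ_B y) + f(π_B p)² g_F(dπ_F x, dπ_F y)`, and whose smooth
structure, directional derivative and Lie bracket behave canonically on the lifts of
functions and of vector fields from the two factors. -/
structure IsWarpedProduct (B : SSRM MB TB) (F : SSRM MF TF) (f : MB → ℝ)
    (W : SSRM (MB × MF) fun pq => TB pq.1 × TF pq.2) : Prop where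
  smooth_f : B.IsFn f
  metric : ∀ (pq : MB × MF) (u v : TB pq.1 × TF pq.2),
    W.g pq u v = B.g pq.1 u.1 v.1 + f pq.1 ^ 2 * F.g pq.2 u.2 v.2
  fn_liftB : ∀ a, B.IsFn a → W.IsFn fun pq => a pq.1
  fn_liftF : ∀ b, F.IsFn b → W.IsFn fun pq => b pq.2
  vf_liftB : ∀ X, B.IsVF X → W.IsVF (liftB X)
  vf_liftF : ∀ U, F.IsVF U → W.IsVF (liftF U)
  D_liftB_fnB : ∀ X a, B.IsVF X → B.IsFn a →
    W.D (liftB X) (fun pq => a pq.1) = fun pq => B.D X a pq.1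
  D_liftB_fnF : ∀ X b, B.IsVF X → F.IsFn b →
    W.D (liftB X) (fun pq => b pq.2) = 0
  D_liftF_fnB : ∀ U a, F.IsVF U → B.IsFn a →
    W.D (liftF U) (fun pq => a pq.1) = 0
  D_liftF_fnF : ∀ U b, F.IsVF U → F.IsFn b →
    W.D (liftF U) (fun pq => b pq.2) = fun pq => F.D U b pq.2
  bracket_BB : ∀ X Y, B.IsVF X → B.IsVF Y →
    W.bracket (liftB X) (liftB Y) = liftB (B.bracket X Y)
  bracket_BF : ∀ X U, B.IsVF X → F.IsVF U →
    W.bracket (liftB X) (liftF U) = 0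
  bracket_FF : ∀ U V, F.IsVF U → F.IsVF V →
    W.bracket (liftF U) (liftF V) = liftF (F.bracket U V)

end SSRM

/-!
On lifts the warped metric splits as `g_B ⊕ f² g_F`, mixed brackets vanish, and lifted
vector fields differentiate lifted functions factorwise. Hence every term of the Koszul
formula is computed on one factor, the only new contribution being `X(f²) = 2 f X(f)`
from a base field differentiating `⟨V,W⟩ = f² g_F(V,W)`. The semi-symmetric correction
`g(Y,P)g(X,Z) − g(X,Y)g(P,Z)` is then read off from the metric on lifts, `P` being a base
field.
-/

namespace SSRM

section

variable {M : Type*} {T : M → Type*} [∀ p, AddCommGroup (T p)] [∀ p, Module ℝ (T p)]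
  (S : SSRM M T)

theorem gf_comm (X Y : ∀ p, T p) : S.gf X Y = S.gf Y X :=
  funext fun p => S.g_symm p _ _

@[simp]
theorem gf_zero_right (X : ∀ p, T p) : S.gf X 0 = 0 := by
  funext p
  simp [gf]

theorem gf_smooth {X Y : ∀ p, T p} (hX : S.IsVF X) (hY : S.IsVF Y) :
    S.IsFn (S.gf X Y) :=
  S.g_smooth X Y hX hY

theorem D_zero {X : ∀ p, T p} (hX : S.IsVF X) : S.D X 0 = 0 :=
  S.D_const X 0 hX

theorem fn_sq {a : M → ℝ} (ha : S.IsFn a) : S.IsFn fun p => a p ^ 2 := by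
  convert S.fn_mul a a ha ha using 1
  funext p
  simp [sq]

theorem D_sq {X : ∀ p, T p} {a : M → ℝ} (hX : S.IsVF X) (ha : S.IsFn a) :
    S.D X (fun p => a p ^ 2) = fun p => 2 * a p * S.D X a p := by
  have hsq : (fun p => a p ^ 2) = a * a := by
    funext p
    simp [sq]
  rw [hsq, S.D_mul_fn X a a hX ha ha]
  funext p
  simp only [Pi.add_apply, Pi.mul_apply]
  ring

end

namespace IsWarpedProduct

variable {MB MF : Type*} {TB : MB → Type*} {TF : MF → Type*}
  [∀ p, AddCommGroup (TB p)] [∀ p, Module ℝ (TB p)]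
  [∀ q, AddCommGroup (TF q)] [∀ q, Module ℝ (TF q)]
  {B : SSRM MB TB} {F : SSRM MF TF} {f : MB → ℝ}
  {Wp : SSRM (MB × MF) fun pq => TB pq.1 × TF pq.2}
  {X Y Z : ∀ p, TB p} {U V W : ∀ q, TF q}

theorem gf_liftB_liftB (hWp : IsWarpedProduct B F f Wp) :
    Wp.gf (liftB X) (liftB Y) = fun pq => B.gf X Y pq.1 := by
  funext pq
  simp [gf, liftB, hWp.metric]

theorem gf_liftB_liftF (hWp : IsWarpedProduct B F f Wp) :
    Wp.gf (liftB X) (liftF U) = 0 := by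
  funext pq
  simp [gf, liftB, liftF, hWp.metric]

theorem gf_liftF_liftB (hWp : IsWarpedProduct B F f Wp) :
    Wp.gf (liftF U) (liftB X) = 0 := by
  rw [gf_comm, hWp.gf_liftB_liftF]

theorem gf_liftF_liftF (hWp : IsWarpedProduct B F f Wp) :
    Wp.gf (liftF U) (liftF V) = fun pq => f pq.1 ^ 2 * F.gf U V pq.2 := by
  funext pq
  simp [gf, liftF, hWp.metric]

theorem bracket_liftF_liftB (hWp : IsWarpedProduct B F f Wp) (hU : F.IsVF U)
    (hX : B.IsVF X) : Wp.bracket (liftF U) (liftB X) = 0 := by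
  rw [Wp.bracket_antisymm _ _ (hWp.vf_liftF U hU) (hWp.vf_liftB X hX),
    hWp.bracket_BF X U hX hU, neg_zero]

theorem D_liftB_mul {a : MB → ℝ} {b : MF → ℝ} (hWp : IsWarpedProduct B F f Wp)
    (hX : B.IsVF X) (ha : B.IsFn a) (hb : F.IsFn b) :
    Wp.D (liftB X) (fun pq => a pq.1 * b pq.2) = fun pq => B.D X a pq.1 * b pq.2 := by
  have h := Wp.D_mul_fn (liftB X) _ _ (hWp.vf_liftB X hX) (hWp.fn_liftB a ha)
    (hWp.fn_liftF b hb)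
  rw [hWp.D_liftB_fnB X a hX ha, hWp.D_liftB_fnF X b hX hb, mul_zero, add_zero] at h
  exact h

theorem D_liftF_mul {a : MB → ℝ} {b : MF → ℝ} (hWp : IsWarpedProduct B F f Wp)
    (hU : F.IsVF U) (ha : B.IsFn a) (hb : F.IsFn b) :
    Wp.D (liftF U) (fun pq => a pq.1 * b pq.2) = fun pq => a pq.1 * F.D U b pq.2 := by
  have h := Wp.D_mul_fn (liftF U) _ _ (hWp.vf_liftF U hU) (hWp.fn_liftB a ha)
    (hWp.fn_liftF b hb)
  rw [hWp.D_liftF_fnB U a hU ha, hWp.D_liftF_fnF U b hU hb, zero_mul, zero_add] at h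
  exact h

theorem D_liftB_gf_liftB_liftB (hWp : IsWarpedProduct B F f Wp) (hX : B.IsVF X)
    (hY : B.IsVF Y) (hZ : B.IsVF Z) :
    Wp.D (liftB X) (Wp.gf (liftB Y) (liftB Z)) = fun pq => B.D X (B.gf Y Z) pq.1 := by
  rw [hWp.gf_liftB_liftB]
  exact hWp.D_liftB_fnB X _ hX (B.gf_smooth hY hZ)

theorem D_liftF_gf_liftB_liftB (hWp : IsWarpedProduct B F f Wp) (hU : F.IsVF U)
    (hX : B.IsVF X) (hY : B.IsVF Y) :
    Wp.D (liftF U) (Wp.gf (liftB X) (liftB Y)) = 0 := by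
  rw [hWp.gf_liftB_liftB]
  exact hWp.D_liftF_fnB U _ hU (B.gf_smooth hX hY)

theorem D_liftB_gf_liftF_liftF (hWp : IsWarpedProduct B F f Wp) (hX : B.IsVF X)
    (hU : F.IsVF U) (hV : F.IsVF V) :
    Wp.D (liftB X) (Wp.gf (liftF U) (liftF V))
      = fun pq => 2 * f pq.1 * B.D X f pq.1 * F.gf U V pq.2 := by
  rw [hWp.gf_liftF_liftF, hWp.D_liftB_mul (a := fun p => f p ^ 2) hX
    (B.fn_sq hWp.smooth_f) (F.gf_smooth hU hV), B.D_sq hX hWp.smooth_f]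

theorem D_liftF_gf_liftF_liftF (hWp : IsWarpedProduct B F f Wp) (hU : F.IsVF U)
    (hV : F.IsVF V) (hW : F.IsVF W) :
    Wp.D (liftF U) (Wp.gf (liftF V) (liftF W))
      = fun pq => f pq.1 ^ 2 * F.D U (F.gf V W) pq.2 := by
  rw [hWp.gf_liftF_liftF, hWp.D_liftF_mul (a := fun p => f p ^ 2) hU
    (B.fn_sq hWp.smooth_f) (F.gf_smooth hV hW)]

theorem K_liftB_liftB_liftB (hWp : IsWarpedProduct B F f Wp) (hX : B.IsVF X)
    (hY : B.IsVF Y) (hZ : B.IsVF Z) :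
    Wp.K (liftB X) (liftB Y) (liftB Z) = fun pq => B.K X Y Z pq.1 := by
  rw [K, hWp.bracket_BB Y Z hY hZ, hWp.bracket_BB Z X hZ hX, hWp.bracket_BB X Y hX hY,
    hWp.D_liftB_gf_liftB_liftB hX hY hZ, hWp.D_liftB_gf_liftB_liftB hY hZ hX,
    hWp.D_liftB_gf_liftB_liftB hZ hX hY]
  simp only [hWp.gf_liftB_liftB]
  rfl

theorem K_liftB_liftB_liftF (hWp : IsWarpedProduct B F f Wp) (hX : B.IsVF X)
    (hY : B.IsVF Y) (hW : F.IsVF W) :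
    Wp.K (liftB X) (liftB Y) (liftF W) = 0 := by
  rw [K, hWp.bracket_BF Y W hY hW, hWp.bracket_liftF_liftB hW hX,
    hWp.bracket_BB X Y hX hY, hWp.D_liftF_gf_liftB_liftB hW hX hY]
  simp [hWp.gf_liftB_liftF, hWp.gf_liftF_liftB, Wp.D_zero (hWp.vf_liftB X hX),
    Wp.D_zero (hWp.vf_liftB Y hY)]

theorem K_liftB_liftF_liftB (hWp : IsWarpedProduct B F f Wp) (hX : B.IsVF X)
    (hW : F.IsVF W) (hY : B.IsVF Y) :
    Wp.K (liftB X) (liftF W) (liftB Y) = 0 := by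
  rw [K, hWp.bracket_liftF_liftB hW hY, hWp.bracket_BB Y X hY hX,
    hWp.bracket_BF X W hX hW, hWp.D_liftF_gf_liftB_liftB hW hY hX]
  simp [hWp.gf_liftB_liftF, hWp.gf_liftF_liftB, Wp.D_zero (hWp.vf_liftB X hX),
    Wp.D_zero (hWp.vf_liftB Y hY)]

theorem K_liftF_liftB_liftB (hWp : IsWarpedProduct B F f Wp) (hW : F.IsVF W)
    (hX : B.IsVF X) (hY : B.IsVF Y) :
    Wp.K (liftF W) (liftB X) (liftB Y) = 0 := by
  rw [K, hWp.bracket_BB X Y hX hY, hWp.bracket_liftF_liftB hW hX,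
    hWp.bracket_BF Y W hY hW, hWp.D_liftF_gf_liftB_liftB hW hX hY]
  simp [hWp.gf_liftB_liftF, hWp.gf_liftF_liftB, Wp.D_zero (hWp.vf_liftB X hX),
    Wp.D_zero (hWp.vf_liftB Y hY)]

theorem K_liftB_liftF_liftF (hWp : IsWarpedProduct B F f Wp) (hX : B.IsVF X)
    (hV : F.IsVF V) (hW : F.IsVF W) :
    Wp.K (liftB X) (liftF V) (liftF W)
      = fun pq => f pq.1 * B.D X f pq.1 * F.gf V W pq.2 := by
  rw [K, hWp.bracket_FF V W hV hW, hWp.bracket_liftF_liftB hW hX,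
    hWp.bracket_BF X V hX hV, hWp.D_liftB_gf_liftF_liftF hX hV hW]
  funext pq
  simp only [hWp.gf_liftB_liftF, hWp.gf_liftF_liftB, gf_zero_right,
    Wp.D_zero (hWp.vf_liftF V hV), Wp.D_zero (hWp.vf_liftF W hW), Pi.smul_apply,
    Pi.add_apply, Pi.sub_apply, Pi.zero_apply, smul_eq_mul]
  ring

theorem K_liftF_liftB_liftF (hWp : IsWarpedProduct B F f Wp) (hV : F.IsVF V)
    (hX : B.IsVF X) (hW : F.IsVF W) :
    Wp.K (liftF V) (liftB X) (liftF W)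
      = fun pq => f pq.1 * B.D X f pq.1 * F.gf V W pq.2 := by
  rw [K, hWp.bracket_BF X W hX hW, hWp.bracket_FF W V hW hV,
    hWp.bracket_liftF_liftB hV hX, hWp.D_liftB_gf_liftF_liftF hX hW hV, F.gf_comm W V]
  funext pq
  simp only [hWp.gf_liftB_liftF, hWp.gf_liftF_liftB, gf_zero_right,
    Wp.D_zero (hWp.vf_liftF V hV), Wp.D_zero (hWp.vf_liftF W hW), Pi.smul_apply,
    Pi.add_apply, Pi.sub_apply, Pi.zero_apply, smul_eq_mul]
  ring

theorem K_liftF_liftF_liftB (hWp : IsWarpedProduct B F f Wp) (hV : F.IsVF V)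
    (hW : F.IsVF W) (hX : B.IsVF X) :
    Wp.K (liftF V) (liftF W) (liftB X)
      = fun pq => -(f pq.1 * B.D X f pq.1 * F.gf V W pq.2) := by
  rw [K, hWp.bracket_liftF_liftB hW hX, hWp.bracket_BF X V hX hV,
    hWp.bracket_FF V W hV hW, hWp.D_liftB_gf_liftF_liftF hX hV hW]
  funext pq
  simp only [hWp.gf_liftB_liftF, hWp.gf_liftF_liftB, gf_zero_right,
    Wp.D_zero (hWp.vf_liftF V hV), Wp.D_zero (hWp.vf_liftF W hW), Pi.smul_apply,
    Pi.add_apply, Pi.sub_apply, Pi.zero_apply, smul_eq_mul]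
  ring

theorem K_liftF_liftF_liftF (hWp : IsWarpedProduct B F f Wp) (hU : F.IsVF U)
    (hV : F.IsVF V) (hW : F.IsVF W) :
    Wp.K (liftF U) (liftF V) (liftF W) = fun pq => f pq.1 ^ 2 * F.K U V W pq.2 := by
  rw [K, hWp.bracket_FF V W hV hW, hWp.bracket_FF W U hW hU, hWp.bracket_FF U V hU hV,
    hWp.D_liftF_gf_liftF_liftF hU hV hW, hWp.D_liftF_gf_liftF_liftF hV hW hU,
    hWp.D_liftF_gf_liftF_liftF hW hU hV]
  funext pq
  simp only [K, hWp.gf_liftF_liftF, Pi.smul_apply, Pi.add_apply, Pi.sub_apply, smul_eq_mul]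
  ring

end IsWarpedProduct

end SSRM

theorem semiSymmetricMetricKoszul_warpedProduct_baseP_general
    {MB MF : Type*} {TB : MB → Type*} {TF : MF → Type*}
    [∀ p, AddCommGroup (TB p)] [∀ p, Module ℝ (TB p)]
    [∀ q, AddCommGroup (TF q)] [∀ q, Module ℝ (TF q)]
    (B : SSRM MB TB) (F : SSRM MF TF) (f : MB → ℝ)
    (Wp : SSRM (MB × MF) fun pq => TB pq.1 × TF pq.2)
    (hWp : SSRM.IsWarpedProduct B F f Wp)
    (X Y Z P : ∀ p, TB p) (hX : B.IsVF X) (hY : B.IsVF Y) (hZ : B.IsVF Z)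
    (U V W : ∀ q, TF q) (hU : F.IsVF U) (hV : F.IsVF V) (hW : F.IsVF W) :
    -- (1) `K̄(X,Y,Z) = K̄_B(X,Y,Z)`
    Wp.Kbar (SSRM.liftB P) (SSRM.liftB X) (SSRM.liftB Y) (SSRM.liftB Z)
      = (fun pq => B.Kbar P X Y Z pq.1) ∧
    -- (2) `K̄(X,Y,W) = K̄(X,W,Y) = K̄(W,X,Y) = 0`
    Wp.Kbar (SSRM.liftB P) (SSRM.liftB X) (SSRM.liftB Y) (SSRM.liftF W) = 0 ∧
    Wp.Kbar (SSRM.liftB P) (SSRM.liftB X) (SSRM.liftF W) (SSRM.liftB Y) = 0 ∧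
    Wp.Kbar (SSRM.liftB P) (SSRM.liftF W) (SSRM.liftB X) (SSRM.liftB Y) = 0 ∧
    -- (3) `K̄(X,V,W) = f·g_F(V,W)·X(f)`
    Wp.Kbar (SSRM.liftB P) (SSRM.liftB X) (SSRM.liftF V) (SSRM.liftF W)
      = (fun pq => f pq.1 * F.gf V W pq.2 * B.D X f pq.1) ∧
    -- (4) `K̄(V,X,W) = −K̄(V,W,X) = f·g_F(V,W)·X(f) + f²·g_B(X,P)·g_F(V,W)`
    Wp.Kbar (SSRM.liftB P) (SSRM.liftF V) (SSRM.liftB X) (SSRM.liftF W)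
      = -Wp.Kbar (SSRM.liftB P) (SSRM.liftF V) (SSRM.liftF W) (SSRM.liftB X) ∧
    Wp.Kbar (SSRM.liftB P) (SSRM.liftF V) (SSRM.liftB X) (SSRM.liftF W)
      = (fun pq => f pq.1 * F.gf V W pq.2 * B.D X f pq.1
          + f pq.1 ^ 2 * B.gf X P pq.1 * F.gf V W pq.2) ∧
    -- (5) `K̄(U,V,W) = f²·K_F(U,V,W)`
    Wp.Kbar (SSRM.liftB P) (SSRM.liftF U) (SSRM.liftF V) (SSRM.liftF W)
      = (fun pq => f pq.1 ^ 2 * F.K U V W pq.2) := by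
  refine ⟨?_, ?_, ?_, ?_, ?_, ?_, ?_, ?_⟩ <;> funext pq <;>
    simp only [SSRM.Kbar, Pi.add_apply, Pi.sub_apply, Pi.mul_apply, Pi.neg_apply,
      Pi.zero_apply, B.gf_comm P X,
      hWp.gf_liftB_liftB, hWp.gf_liftB_liftF, hWp.gf_liftF_liftB, hWp.gf_liftF_liftF,
      hWp.K_liftB_liftB_liftB hX hY hZ, hWp.K_liftB_liftB_liftF hX hY hW,
      hWp.K_liftB_liftF_liftB hX hW hY, hWp.K_liftF_liftB_liftB hW hX hY,
      hWp.K_liftB_liftF_liftF hX hV hW, hWp.K_liftF_liftB_liftF hV hX hW,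
      hWp.K_liftF_liftF_liftB hV hW hX, hWp.K_liftF_liftF_liftF hU hV hW] <;>
    ring

/-- Proposition 2.15: the semi-symmetric metric Koszul form of a
(possibly degenerate) warped product `B ×_f F`, with respect to a vector field
`P ∈ Γ(TB)`, on lifts of vector fields `X,Y,Z ∈ Γ(TB)` and `U,V,W ∈ Γ(TF)`, in
terms of the data on the factors. -/
theorem semiSymmetricMetricKoszul_warpedProduct_baseP
    {MB MF : Type*} {TB : MB → Type*} {TF : MF → Type*}
    [∀ p, AddCommGroup (TB p)] [∀ p, Module ℝ (TB p)]
    [∀ q, AddCommGroup (TF q)] [∀ q, Module ℝ (TF q)]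
    (B : SSRM MB TB) (F : SSRM MF TF) (f : MB → ℝ)
    (Wp : SSRM (MB × MF) fun pq => TB pq.1 × TF pq.2)
    (hWp : SSRM.IsWarpedProduct B F f Wp)
    (X Y Z P : ∀ p, TB p) (hX : B.IsVF X) (hY : B.IsVF Y) (hZ : B.IsVF Z)
    (hP : B.IsVF P)
    (U V W : ∀ q, TF q) (hU : F.IsVF U) (hV : F.IsVF V) (hW : F.IsVF W) :
    -- (1) `K̄(X,Y,Z) = K̄_B(X,Y,Z)`
    Wp.Kbar (SSRM.liftB P) (SSRM.liftB X) (SSRM.liftB Y) (SSRM.liftB Z)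
      = (fun pq => B.Kbar P X Y Z pq.1) ∧
    -- (2) `K̄(X,Y,W) = K̄(X,W,Y) = K̄(W,X,Y) = 0`
    Wp.Kbar (SSRM.liftB P) (SSRM.liftB X) (SSRM.liftB Y) (SSRM.liftF W) = 0 ∧
    Wp.Kbar (SSRM.liftB P) (SSRM.liftB X) (SSRM.liftF W) (SSRM.liftB Y) = 0 ∧
    Wp.Kbar (SSRM.liftB P) (SSRM.liftF W) (SSRM.liftB X) (SSRM.liftB Y) = 0 ∧
    -- (3) `K̄(X,V,W) = f·g_F(V,W)·X(f)`
    Wp.Kbar (SSRM.liftB P) (SSRM.liftB X) (SSRM.liftF V) (SSRM.liftF W)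
      = (fun pq => f pq.1 * F.gf V W pq.2 * B.D X f pq.1) ∧
    -- (4) `K̄(V,X,W) = −K̄(V,W,X) = f·g_F(V,W)·X(f) + f²·g_B(X,P)·g_F(V,W)`
    Wp.Kbar (SSRM.liftB P) (SSRM.liftF V) (SSRM.liftB X) (SSRM.liftF W)
      = -Wp.Kbar (SSRM.liftB P) (SSRM.liftF V) (SSRM.liftF W) (SSRM.liftB X) ∧
    Wp.Kbar (SSRM.liftB P) (SSRM.liftF V) (SSRM.liftB X) (SSRM.liftF W)
      = (fun pq => f pq.1 * F.gf V W pq.2 * B.D X f pq.1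
          + f pq.1 ^ 2 * B.gf X P pq.1 * F.gf V W pq.2) ∧
    -- (5) `K̄(U,V,W) = f²·K_F(U,V,W)`
    Wp.Kbar (SSRM.liftB P) (SSRM.liftF U) (SSRM.liftF V) (SSRM.liftF W)
      = (fun pq => f pq.1 ^ 2 * F.K U V W pq.2) :=
  semiSymmetricMetricKoszul_warpedProduct_baseP_general B F f Wp hWp X Y Z P hX hY hZ U V W hU hV hW
end
end

section
/- Let (M,g,J) be an almost product singular semi-Riemannian manifold which is radical-stationary. Then for all smooth vector fields X,Y on M, the 1-form ∇̃^♭_X Y = K̃(X,Y,·) belongs to A^•(M). -/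
noncomputable section

/-!
`K̃(X,Y,·)` is the average of `K(X,Y,·)` and of the pullback `Z ↦ K(X,JY,JZ)` of
`K(X,JY,·)` along `J`. Both lie in `A^•(M)` by radical-stationarity, since `J` preserves
vector fields and `g(v, JZ) = g(Jv, Z)` pulls a representing vector `v` back to `Jv`;
and `A^•(M)` is closed under sums and constant multiples.
-/

namespace SSRM

variable {M : Type*} {T : M → Type*} [∀ p, AddCommGroup (T p)] [∀ p, Module ℝ (T p)]
  {S : SSRM M T}

theorem MemAsup.add {ω η : (∀ p, T p) → M → ℝ} (hω : S.MemAsup ω) (hη : S.MemAsup η) :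
    S.MemAsup (ω + η) := by
  intro p
  obtain ⟨v, hv⟩ := hω p
  obtain ⟨w, hw⟩ := hη p
  exact ⟨v + w, fun Z hZ => by simp [hv Z hZ, hw Z hZ]⟩

theorem MemAsup.const_smul {ω : (∀ p, T p) → M → ℝ} (hω : S.MemAsup ω) (c : ℝ) :
    S.MemAsup (c • ω) := by
  intro p
  obtain ⟨v, hv⟩ := hω p
  exact ⟨c • v, fun Z hZ => by simp [hv Z hZ]⟩

theorem nablaFlatTilde_eq (J : ∀ p, T p →ₗ[ℝ] T p) (X Y : ∀ p, T p) :
    S.nablaFlatTilde J X Y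
      = ((1 : ℝ) / 2) • ((fun Z => S.K X Y Z) + fun Z => S.K X (Jv J Y) (Jv J Z)) :=
  rfl

variable {J : ∀ p, T p →ₗ[ℝ] T p}

theorem IsAlmostProduct.g_apply_left (hJ : S.IsAlmostProduct J) (p : M) (u v : T p) :
    S.g p (J p u) v = S.g p u (J p v) := by
  rw [← hJ.compat p u (J p v), hJ.invol]

theorem MemAsup.comp_Jv (hJ : S.IsAlmostProduct J) {ω : (∀ p, T p) → M → ℝ}
    (hω : S.MemAsup ω) : S.MemAsup fun Z => ω (Jv J Z) := by
  intro p
  obtain ⟨v, hv⟩ := hω p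
  exact ⟨J p v, fun Z hZ => (hv _ (hJ.smooth Z hZ)).trans (hJ.g_apply_left p v (Z p)).symm⟩

end SSRM

/-- Proposition 4.6: on a radical-stationary almost product
singular semi-Riemannian manifold `(M,g,J)`, the 1-form `∇̃♭_X Y = K̃(X,Y,·)`
belongs to `A^•(M)` for all smooth vector fields `X,Y`. -/
theorem almostProduct_nablaFlatTilde_memAsup
    {M : Type*} {T : M → Type*} [∀ p, AddCommGroup (T p)] [∀ p, Module ℝ (T p)]
    (S : SSRM M T) (J : ∀ p, T p →ₗ[ℝ] T p) (hJ : S.IsAlmostProduct J)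
    (hS : S.RadicalStationary)
    (X Y : ∀ p, T p) (hX : S.IsVF X) (hY : S.IsVF Y) :
    S.MemAsup (S.nablaFlatTilde J X Y) := by
  rw [SSRM.nablaFlatTilde_eq]
  exact ((hS X Y hX hY).add
    ((hS X (SSRM.Jv J Y) hX (hJ.smooth Y hY)).comp_Jv hJ)).const_smul _
end
end
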